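/- Merging lemma for default logic: Let D be a set of defaults and let p, x be variables with p not occurring in D. Define T = ⟨{(: x∧p / x∧p), (: ¬x∧p / ¬x∧p)} ∪ {(p∧α : β / γ) | (α : β / γ) ∈ D}, ∅⟩. Then the extensions of T are exactly the extensions of ⟨D|_{x=true}, ∅⟩ with x and p added to each, together with the extensions of ⟨D|_{x=false}, ∅⟩ with ¬x and p added to each. -/

import Mathlib

/-- Propositional formulas over variables indexed by `Nat`. -/
inductive Fm where
  | var : Nat → Fm
  | tru : Fm
  | fls : Fm
  | neg : Fm → Fm
  | conj : Fm → Fm → Fm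
  | disj : Fm → Fm → Fm
deriving DecidableEq

/-- Evaluation of a formula under an assignment. -/
def Fm.eval (σ : Nat → Bool) : Fm → Bool
  | .var n => σ n
  | .tru => true
  | .fls => false
  | .neg F => !(F.eval σ)
  | .conj F G => F.eval σ && G.eval σ
  | .disj F G => F.eval σ || G.eval σ

/-- `F.subst x v` replaces every occurrence of variable `x` by the constant `v`. -/
def Fm.subst (x : Nat) (v : Bool) : Fm → Fm
  | .var n => if n = x then (if v then .tru else .fls) else .var n
  | .tru => .tru
  | .fls => .fls
  | .neg F => .neg (F.subst x v)
  | .conj F G => .conj (F.subst x v) (G.subst x v)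
  | .disj F G => .disj (F.subst x v) (G.subst x v)

/-- `F.occurs x` : variable `x` occurs in `F`. -/
def Fm.occurs (x : Nat) : Fm → Prop
  | .var n => n = x
  | .tru => False
  | .fls => False
  | .neg F => F.occurs x
  | .conj F G => F.occurs x ∨ G.occurs x
  | .disj F G => F.occurs x ∨ G.occurs x

/-- Propositional entailment from a set of formulas. -/
def Entails (S : Set Fm) (f : Fm) : Prop :=
  ∀ σ : Nat → Bool, (∀ g ∈ S, g.eval σ = true) → f.eval σ = true

/-- Deductive closure. -/
def Th (S : Set Fm) : Set Fm := {f | Entails S f}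

/-- A default `α : β / γ` with precondition `α`, justification `β`, consequence `γ`. -/
structure Default where
  pre : Fm
  jus : Fm
  con : Fm

/-- `G` is closed for the Reiter operator relative to candidate extension `E`:
it contains `W`, is deductively closed, and applies every default of `D` whose
precondition is in `G` and whose justification is consistent with `E`. -/
def DLClosed (D : Set Default) (W : Set Fm) (E : Set Fm) (G : Set Fm) : Prop :=
  W ⊆ G ∧ (∀ f, Entails G f → f ∈ G) ∧
    ∀ d ∈ D, d.pre ∈ G → (Fm.neg d.jus) ∉ E → d.con ∈ G

/-- Reiter extension: `E` is the least set closed for the operator relative to `E` itself. -/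
def IsExtension (D : Set Default) (W : Set Fm) (E : Set Fm) : Prop :=
  E = ⋂₀ {G | DLClosed D W E G}

/-- Skeptical entailment: `φ` belongs to every extension. -/
def Skeptical (D : Set Default) (W : Set Fm) (φ : Fm) : Prop :=
  ∀ E, IsExtension D W E → φ ∈ E

/-- Substitution applied throughout a default. -/
def Default.subst (x : Nat) (v : Bool) (d : Default) : Default :=
  ⟨d.pre.subst x v, d.jus.subst x v, d.con.subst x v⟩

/-- `x` occurs in a default. -/
def Default.occurs (x : Nat) (d : Default) : Prop :=
  d.pre.occurs x ∨ d.jus.occurs x ∨ d.con.occurs x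

/-- The merged default theory of the raising construction:
`{(: x∧p / x∧p), (: ¬x∧p / ¬x∧p)} ∪ {(p∧α : β / γ) | (α:β/γ) ∈ D}`. -/
def mergedD (D : Set Default) (x p : Nat) : Set Default :=
  {⟨.tru, .conj (.var x) (.var p), .conj (.var x) (.var p)⟩,
   ⟨.tru, .conj (.neg (.var x)) (.var p), .conj (.neg (.var x)) (.var p)⟩} ∪
  (fun d => Default.mk (.conj (.var p) d.pre) d.jus d.con) '' D


/-! Write `x^true = x`, `x^false = ¬x`. Fix the branch `v` whose special default
`(: x^v ∧ p / x^v ∧ p)` fires in an extension `E` of the merged theory (the two cannot both be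
blocked, and each blocks the other). Inside `E` the literal `x^v` makes every formula equivalent
to its instance under `x := v`, so the guarded defaults of the merged theory behave exactly like
the defaults of `D|_{x=v}`, and `E` is the closure of the `D|_{x=v}`-part with `x^v` and `p`
added. Conversely, adding `x^v` and `p` to a set closed under the substitutions `x := v` and
`p := true` is conservative for formulas mentioning neither variable (any model can be moved to
`x = v, p = true`), so the justifications of `D|_{x=v}` are blocked by the enlarged set iff they
were blocked before. -/

open Function

namespace Fm

variable {y : Nat} {w : Bool}

theorem eval_subst (σ : Nat → Bool) (f : Fm) :
    (f.subst y w).eval σ = f.eval (update σ y w) := by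
  induction f with
  | var n => by_cases h : n = y <;> cases w <;> simp [subst, eval, h]
  | tru | fls => rfl
  | neg F ih => simp [subst, eval, ih]
  | conj F G ihF ihG | disj F G ihF ihG => simp [subst, eval, ihF, ihG]

theorem eval_subst_of_eq {σ : Nat → Bool} (hσ : σ y = w) (f : Fm) :
    (f.subst y w).eval σ = f.eval σ := by
  subst hσ
  rw [eval_subst, update_eq_self]

theorem eval_update_of_not_occurs {f : Fm} (h : ¬ f.occurs y) (σ : Nat → Bool) (b : Bool) :
    f.eval (update σ y b) = f.eval σ := by
  induction f <;> simp_all [occurs, eval]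

theorem subst_of_not_occurs {f : Fm} (h : ¬ f.occurs y) : f.subst y w = f := by
  induction f <;> simp_all [occurs, subst]

theorem not_occurs_subst_self (f : Fm) : ¬ (f.subst y w).occurs y := by
  induction f <;> cases w <;> simp_all [occurs, subst] <;> split_ifs <;> simp_all [occurs]

theorem not_occurs_subst {z : Nat} {f : Fm} (h : ¬ f.occurs z) : ¬ (f.subst y w).occurs z := by
  induction f <;> cases w <;> simp_all [occurs, subst] <;> split_ifs <;> simp_all [occurs]

end Fm

namespace Default

variable {y : Nat} {w : Bool}

theorem not_occurs_subst_self (d : Default) : ¬ (d.subst y w).occurs y := by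
  simp only [occurs, subst, not_or]
  exact ⟨Fm.not_occurs_subst_self _, Fm.not_occurs_subst_self _, Fm.not_occurs_subst_self _⟩

theorem not_occurs_subst {z : Nat} {d : Default} (h : ¬ d.occurs z) :
    ¬ (d.subst y w).occurs z := by
  simp only [occurs, subst, not_or] at h ⊢
  exact ⟨Fm.not_occurs_subst h.1, Fm.not_occurs_subst h.2.1, Fm.not_occurs_subst h.2.2⟩

end Default

def DedClosed (S : Set Fm) : Prop := ∀ f, Entails S f → f ∈ S

def lit (y : Nat) (w : Bool) : Fm := cond w (.var y) (.neg (.var y))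

section Entailment

variable {S T G : Set Fm} {f g : Fm} {y : Nat} {w : Bool}

theorem eval_lit (σ : Nat → Bool) : (lit y w).eval σ = true ↔ σ y = w := by
  cases w <;> simp [lit, Fm.eval]

theorem entails_of_mem (h : f ∈ S) : Entails S f := fun _ hσ => hσ f h

theorem Entails.mono (hST : S ⊆ T) (h : Entails S f) : Entails T f :=
  fun σ hσ => h σ fun g hg => hσ g (hST hg)

theorem Entails.subst (h : Entails S f) : Entails (Fm.subst y w '' S) (f.subst y w) := by
  intro σ hσ
  rw [Fm.eval_subst]
  exact h _ fun g hg => by rw [← Fm.eval_subst]; exact hσ _ ⟨g, hg, rfl⟩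

theorem subset_Th : S ⊆ Th S := fun _ => entails_of_mem

theorem dedClosed_Th : DedClosed (Th S) :=
  fun _ h σ hσ => h σ fun _ hg => hg σ hσ

theorem Th_subset (hG : DedClosed G) (h : S ⊆ G) : Th S ⊆ G :=
  fun f hf => hG f (hf.mono h)

theorem DedClosed.conj_mem_iff (hS : DedClosed S) : Fm.conj f g ∈ S ↔ f ∈ S ∧ g ∈ S := by
  refine ⟨fun h => ⟨hS f fun σ hσ => ?_, hS g fun σ hσ => ?_⟩,
    fun h => hS _ fun σ hσ => ?_⟩
  · exact (by simpa [Fm.eval] using hσ _ h : _ ∧ _).1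
  · exact (by simpa [Fm.eval] using hσ _ h : _ ∧ _).2
  · simp [Fm.eval, hσ _ h.1, hσ _ h.2]

theorem DedClosed.subst_mem_iff (hS : DedClosed S) (hl : lit y w ∈ S) :
    f.subst y w ∈ S ↔ f ∈ S := by
  have heval : ∀ σ, (∀ g ∈ S, g.eval σ = true) → (f.subst y w).eval σ = f.eval σ :=
    fun σ hσ => Fm.eval_subst_of_eq ((eval_lit σ).1 (hσ _ hl)) f
  exact ⟨fun h => hS f fun σ hσ => heval σ hσ ▸ hσ _ h,
    fun h => hS _ fun σ hσ => (heval σ hσ).symm ▸ hσ _ h⟩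

end Entailment

def SubstClosed (y : Nat) (w : Bool) (S : Set Fm) : Prop := ∀ f ∈ S, f.subst y w ∈ S

/-- Reiter's operator `Γ_{(D,W)}(E)`. -/
def reiterOp (D : Set Default) (W E : Set Fm) : Set Fm := ⋂₀ {G | DLClosed D W E G}

section Reiter

variable {D : Set Default} {W E G : Set Fm}

theorem DLClosed.dedClosed (h : DLClosed D W E G) : DedClosed G := h.2.1

theorem DLClosed.con_mem (h : DLClosed D W E G) {d : Default} (hd : d ∈ D) (hpre : d.pre ∈ G)
    (hjus : Fm.neg d.jus ∉ E) : d.con ∈ G :=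
  h.2.2 d hd hpre hjus

theorem dlClosed_reiterOp : DLClosed D W E (reiterOp D W E) :=
  ⟨fun _ hf => Set.mem_sInter.2 fun _ hG => hG.1 hf,
    fun f hf => Set.mem_sInter.2 fun _ hG => hG.2.1 f (hf.mono (Set.sInter_subset_of_mem hG)),
    fun d hd hpre hjus => Set.mem_sInter.2 fun G hG =>
      hG.2.2 d hd (Set.mem_sInter.1 hpre G hG) hjus⟩

theorem reiterOp_subset (hG : DLClosed D W E G) : reiterOp D W E ⊆ G :=
  Set.sInter_subset_of_mem hG

theorem reiterOp_congr {E' : Set Fm} (h : ∀ d ∈ D, Fm.neg d.jus ∈ E ↔ Fm.neg d.jus ∈ E') :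
    reiterOp D W E = reiterOp D W E' := by
  refine congrArg Set.sInter (Set.ext fun G => and_congr_right fun _ => and_congr_right fun _ =>
    forall₂_congr fun d hd => ?_)
  rw [h d hd]

theorem substClosed_reiterOp {y : Nat} (w : Bool) (hW : ∀ f ∈ W, ¬ f.occurs y)
    (hD : ∀ d ∈ D, ¬ d.occurs y) : SubstClosed y w (reiterOp D W E) := by
  intro f hf
  refine Set.mem_sInter.2 fun G hG => Set.mem_sInter.1 hf {g | g.subst y w ∈ G} ⟨?_, ?_, ?_⟩
  · intro g hg
    simpa [Fm.subst_of_not_occurs (hW g hg)] using hG.1 hg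
  · intro g hg
    exact hG.dedClosed _ (hg.subst.mono (by rintro _ ⟨h, hh, rfl⟩; exact hh))
  · intro d hd hpre hjus
    obtain ⟨hpre', -, hcon'⟩ := not_or.1 (hD d hd) |>.imp_right not_or.1
    simp only [Set.mem_ofPred_eq, Fm.subst_of_not_occurs hpre', Fm.subst_of_not_occurs hcon']
      at hpre ⊢
    exact hG.con_mem hd hpre hjus

theorem IsExtension.dlClosed (h : IsExtension D W E) : DLClosed D W E E := by
  have h' : E = reiterOp D W E := h
  nth_rewrite 2 [h']
  exact dlClosed_reiterOp

theorem IsExtension.subset (h : IsExtension D W E) (hG : DLClosed D W E G) : E ⊆ G := by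
  rw [h]
  exact reiterOp_subset hG

theorem IsExtension.fls_not_mem (h : IsExtension D ∅ E) : Fm.fls ∉ E := by
  intro hfls
  have hall : ∀ f, f ∈ E := fun f => h.dlClosed.dedClosed f fun σ hσ => by
    simpa [Fm.eval] using hσ _ hfls
  have hTh : DLClosed D ∅ E (Th ∅) :=
    ⟨Set.empty_subset _, dedClosed_Th, fun _ _ _ hjus => absurd (hall _) hjus⟩
  simpa [Fm.eval] using h.subset hTh hfls (fun _ => true) (by simp)

end Reiter

def branchFm (x p : Nat) (v : Bool) : Fm := .conj (lit x v) (.var p)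

def branchDefault (x p : Nat) (v : Bool) : Default := ⟨.tru, branchFm x p v, branchFm x p v⟩

def Default.guard (p : Nat) (d : Default) : Default := ⟨.conj (.var p) d.pre, d.jus, d.con⟩

section Merging

variable {D : Set Default} {x p : Nat} {v : Bool} {S E : Set Fm}

theorem mergedD_eq : mergedD D x p = Set.range (branchDefault x p) ∪ Default.guard p '' D := by
  ext d
  simp [mergedD, branchDefault, branchFm, lit, Default.guard, eq_comm, or_comm]

theorem branchDefault_mem_mergedD (v : Bool) : branchDefault x p v ∈ mergedD D x p := by
  rw [mergedD_eq]
  exact Or.inl ⟨v, rfl⟩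

theorem guard_mem_mergedD {d : Default} (hd : d ∈ D) : d.guard p ∈ mergedD D x p := by
  rw [mergedD_eq]
  exact Or.inr ⟨d, hd, rfl⟩

theorem DedClosed.neg_branchFm_not_mem (hS : DedClosed S) (hl : lit x v ∈ S) :
    Fm.neg (branchFm x p (!v)) ∈ S :=
  hS _ fun σ hσ => by
    have hx := (eval_lit σ).1 (hσ _ hl)
    cases v <;> simp [Fm.eval, branchFm, lit, hx]

theorem IsExtension.exists_neg_branchFm_not_mem (hE : IsExtension (mergedD D x p) ∅ E) :
    ∃ v, Fm.neg (branchFm x p v) ∉ E := by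
  by_contra! hblocked
  have hTh : DLClosed (mergedD D x p) ∅ E (Th ∅) := by
    refine ⟨Set.empty_subset _, dedClosed_Th, ?_⟩
    rw [mergedD_eq]
    rintro _ (⟨w, rfl⟩ | ⟨d, -, rfl⟩) hpre hjus
    · exact absurd (hblocked w) hjus
    · simpa [Default.guard, Fm.eval] using hpre (fun _ => false) (by simp)
  simpa [Fm.eval, branchFm, lit] using hE.subset hTh (hblocked true) (fun _ => true) (by simp)

theorem mem_of_mem_Th_union (hxp : x ≠ p) (hS : DedClosed S) (hSx : SubstClosed x v S)
    (hSp : SubstClosed p true S) {f : Fm} (hfx : ¬ f.occurs x) (hfp : ¬ f.occurs p)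
    (hf : f ∈ Th (S ∪ {lit x v, .var p})) : f ∈ S := by
  refine hS f fun σ hσ => ?_
  let τ := update (update σ p true) x v
  have hτS : ∀ g ∈ S, g.eval τ = true := fun g hg => by
    simpa only [Fm.eval_subst] using hσ _ (hSp _ (hSx g hg))
  have hτ : ∀ g ∈ S ∪ {lit x v, .var p}, g.eval τ = true := by
    rintro g (hg | rfl | rfl)
    · exact hτS g hg
    · exact (eval_lit τ).2 (update_self ..)
    · simp [τ, Fm.eval, update_of_ne hxp.symm]
  simpa only [τ, Fm.eval_update_of_not_occurs hfx, Fm.eval_update_of_not_occurs hfp] using hf τ hτ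

theorem substClosed_reiterOp_substD (hp : ∀ d ∈ D, ¬ d.occurs p) (E : Set Fm) :
    SubstClosed x v (reiterOp (Default.subst x v '' D) ∅ E) ∧
      SubstClosed p true (reiterOp (Default.subst x v '' D) ∅ E) := by
  refine ⟨substClosed_reiterOp _ (by simp) ?_, substClosed_reiterOp _ (by simp) ?_⟩
  · rintro _ ⟨d, -, rfl⟩
    exact d.not_occurs_subst_self
  · rintro _ ⟨d, hd, rfl⟩
    exact Default.not_occurs_subst (hp d hd)

theorem reiterOp_substD_Th_union (hxp : x ≠ p) (hp : ∀ d ∈ D, ¬ d.occurs p) (hS : DedClosed S)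
    (hSx : SubstClosed x v S) (hSp : SubstClosed p true S) :
    reiterOp (Default.subst x v '' D) ∅ (Th (S ∪ {lit x v, .var p})) =
      reiterOp (Default.subst x v '' D) ∅ S := by
  refine reiterOp_congr ?_
  rintro _ ⟨d, hd, rfl⟩
  refine ⟨mem_of_mem_Th_union hxp hS hSx hSp ?_ ?_, fun h => subset_Th (Or.inl h)⟩
  · exact fun h => d.not_occurs_subst_self (Or.inr (Or.inl h))
  · exact fun h => Default.not_occurs_subst (hp d hd) (Or.inr (Or.inl h))

theorem reiterOp_mergedD (hxp : x ≠ p) (hp : ∀ d ∈ D, ¬ d.occurs p) (hE : DedClosed E)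
    (hl : lit x v ∈ E) (hj : Fm.neg (branchFm x p v) ∉ E) :
    reiterOp (mergedD D x p) ∅ E =
      Th (reiterOp (Default.subst x v '' D) ∅ E ∪ {lit x v, .var p}) := by
  have hjus : ∀ d : Default, Fm.neg (d.subst x v).jus ∈ E ↔ Fm.neg d.jus ∈ E :=
    fun d => hE.subst_mem_iff (f := Fm.neg d.jus) hl
  set E₀ := reiterOp (Default.subst x v '' D) ∅ E
  have hE₀ : DLClosed (Default.subst x v '' D) ∅ E E₀ := dlClosed_reiterOp
  obtain ⟨hE₀x, hE₀p⟩ := substClosed_reiterOp_substD (x := x) (v := v) hp E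
  refine subset_antisymm (reiterOp_subset ⟨Set.empty_subset _, dedClosed_Th, ?_⟩) ?_
  · have hlG : lit x v ∈ Th (E₀ ∪ {lit x v, .var p}) := subset_Th (by simp)
    rw [mergedD_eq]
    rintro _ (⟨w, rfl⟩ | ⟨d, hd, rfl⟩) hpre hjus'
    · obtain rfl | rfl : w = v ∨ w = !v := by cases w <;> cases v <;> simp
      · exact dedClosed_Th.conj_mem_iff.2 ⟨hlG, subset_Th (by simp)⟩
      · exact absurd (hE.neg_branchFm_not_mem hl) hjus'
    · have hpre₀ : d.pre.subst x v ∈ E₀ := by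
        refine mem_of_mem_Th_union hxp hE₀.dedClosed hE₀x hE₀p (Fm.not_occurs_subst_self _)
          (Fm.not_occurs_subst fun h => hp d hd (Or.inl h)) ?_
        exact (dedClosed_Th.subst_mem_iff hlG).2 (dedClosed_Th.conj_mem_iff.1 hpre).2
      have hcon₀ : d.con.subst x v ∈ E₀ :=
        hE₀.con_mem ⟨d, hd, rfl⟩ hpre₀ ((hjus d).not.2 hjus')
      exact (dedClosed_Th.subst_mem_iff hlG).1 (subset_Th (Or.inl hcon₀))
  · have hΛ : DLClosed (mergedD D x p) ∅ E (reiterOp (mergedD D x p) ∅ E) := dlClosed_reiterOp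
    have hΛded := hΛ.dedClosed
    have hbranch := hΛ.con_mem (branchDefault_mem_mergedD v) (hΛded _ fun _ _ => rfl) hj
    obtain ⟨hlΛ, hpΛ⟩ := hΛded.conj_mem_iff.1 hbranch
    refine Th_subset hΛded (Set.union_subset ?_ (Set.insert_subset hlΛ (by simpa using hpΛ)))
    refine reiterOp_subset ⟨Set.empty_subset _, hΛded, ?_⟩
    rintro _ ⟨d, hd, rfl⟩ hpre hjus'
    have hguard : (d.guard p).pre ∈ reiterOp (mergedD D x p) ∅ E :=
      hΛded.conj_mem_iff.2 ⟨hpΛ, (hΛded.subst_mem_iff hlΛ).1 hpre⟩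
    exact (hΛded.subst_mem_iff hlΛ).2
      (hΛ.con_mem (d := d.guard p) (guard_mem_mergedD hd) hguard ((hjus d).not.1 hjus'))

theorem IsExtension.exists_substD_of_mergedD (hxp : x ≠ p) (hp : ∀ d ∈ D, ¬ d.occurs p)
    (hE : IsExtension (mergedD D x p) ∅ E) (hj : Fm.neg (branchFm x p v) ∉ E) :
    ∃ E₀, IsExtension (Default.subst x v '' D) ∅ E₀ ∧ E = Th (E₀ ∪ {lit x v, .var p}) := by
  have hEc := hE.dlClosed
  have hbranch := hEc.con_mem (branchDefault_mem_mergedD v) (hEc.dedClosed _ fun _ _ => rfl) hj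
  set E₀ := reiterOp (Default.subst x v '' D) ∅ E
  have hEq : E = Th (E₀ ∪ {lit x v, .var p}) :=
    hE.trans (reiterOp_mergedD hxp hp hEc.dedClosed (hEc.dedClosed.conj_mem_iff.1 hbranch).1 hj)
  have hE₀ := substClosed_reiterOp_substD (x := x) (v := v) hp E
  refine ⟨E₀, ?_, hEq⟩
  calc E₀ = reiterOp (Default.subst x v '' D) ∅ (Th (E₀ ∪ {lit x v, .var p})) := by rw [← hEq]
    _ = reiterOp (Default.subst x v '' D) ∅ E₀ :=
      reiterOp_substD_Th_union hxp hp dlClosed_reiterOp.dedClosed hE₀.1 hE₀.2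

theorem IsExtension.mergedD_of_substD (hxp : x ≠ p) (hp : ∀ d ∈ D, ¬ d.occurs p) {E₀ : Set Fm}
    (h₀ : IsExtension (Default.subst x v '' D) ∅ E₀) :
    IsExtension (mergedD D x p) ∅ (Th (E₀ ∪ {lit x v, .var p})) := by
  have h₀' : E₀ = reiterOp (Default.subst x v '' D) ∅ E₀ := h₀
  have hded₀ : DedClosed E₀ := h₀.dlClosed.dedClosed
  obtain ⟨hx₀, hp₀⟩ : SubstClosed x v E₀ ∧ SubstClosed p true E₀ := by
    rw [h₀']
    exact substClosed_reiterOp_substD hp E₀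
  have hl : lit x v ∈ Th (E₀ ∪ {lit x v, .var p}) := subset_Th (by simp)
  have hj : Fm.neg (branchFm x p v) ∉ Th (E₀ ∪ {lit x v, .var p}) := by
    intro hneg
    refine h₀.fls_not_mem (mem_of_mem_Th_union hxp hded₀ hx₀ hp₀ nofun nofun fun σ hσ => ?_)
    have hbranch : branchFm x p v ∈ Th (E₀ ∪ {lit x v, .var p}) :=
      dedClosed_Th.conj_mem_iff.2 ⟨hl, subset_Th (by simp)⟩
    simpa [Fm.eval, hbranch σ hσ] using hneg σ hσ
  show _ = reiterOp _ _ _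
  rw [reiterOp_mergedD hxp hp dedClosed_Th hl hj, reiterOp_substD_Th_union hxp hp hded₀ hx₀ hp₀,
    ← h₀']

end Merging

/-- merging lemma for default logic: the extensions of the merged
theory are exactly the extensions of `⟨D|_{x=true}, ∅⟩` with `x` and `p` added
to each, together with the extensions of `⟨D|_{x=false}, ∅⟩` with `¬x` and `p`
added to each. -/
theorem default_merging_lemma (D : Set Default) (x p : Nat) (hxp : x ≠ p)
    (hp : ∀ d ∈ D, ¬ d.occurs p) :
    ∀ E, IsExtension (mergedD D x p) ∅ E ↔
      ((∃ E₀, IsExtension ((Default.subst x true) '' D) ∅ E₀ ∧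
          E = Th (E₀ ∪ {.var x, .var p})) ∨
       (∃ E₀, IsExtension ((Default.subst x false) '' D) ∅ E₀ ∧
          E = Th (E₀ ∪ {.neg (.var x), .var p}))) := by
  intro E
  constructor
  · intro hE
    obtain ⟨v, hj⟩ := hE.exists_neg_branchFm_not_mem
    cases v
    · exact Or.inr (hE.exists_substD_of_mergedD hxp hp hj)
    · exact Or.inl (hE.exists_substD_of_mergedD hxp hp hj)
  · rintro (⟨E₀, h₀, rfl⟩ | ⟨E₀, h₀, rfl⟩)
    · exact h₀.mergedD_of_substD (v := true) hxp hp
    · exact h₀.mergedD_of_substD (v := false) hxp hp
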